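/- Let Θ(x) = x/|x|_q^d on ℝ^d\{0" } with q = d/(d-1), and define the discrete flow θ on edges of ℤ^d by letting θ(xy), for neighboring x,y ∈ ℤ^d, be the flux of Θ through the unit face S_{xy} of the cube of side 1 centered at x perpendicular to the direction from x to y. Then θ satisfies the node law on ℤ^d \ {0}: for every x ∈ ℤ^d with x ≠ 0, ∑_{y∼x} θ(xy) = 0. -/

import Mathlib

open MeasureTheory Set

/-!
Write `g y = ∑ j, |y j| ^ q`, so that `Θ i y = y i * g y ^ (-r)` with `r = d - 1`. Since
`∂ᵢ g = q |yᵢ|^(q-2) yᵢ`, the divergence of `Θ` is `(d - q r) g ^ (-r)`, which vanishes because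
`q r = d`. For a lattice point `x ≠ 0` the closed unit cube centred at `x` misses the origin, so `Θ`
is differentiable on it, and the divergence theorem on that cube says that the net flux out of it,
i.e. `∑ i, (θ(x, x + eᵢ) + θ(x, x - eᵢ))`, is `0`.
-/

noncomputable section

variable {ι : Type*} [Fintype ι] {q : ℝ}

def radialField (q r : ℝ) (i : ι) (y : ι → ℝ) : ℝ :=
  y i / (∑ j, |y j| ^ q) ^ r

theorem abs_rpow_sub_two_mul_sq (hq : q ≠ 0) (t : ℝ) : |t| ^ (q - 2) * t ^ 2 = |t| ^ q := by
  rcases eq_or_ne t 0 with rfl | ht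
  · simp [Real.zero_rpow hq]
  · rw [← sq_abs, ← Real.rpow_natCast, ← Real.rpow_add (abs_pos.2 ht)]
    norm_num

theorem sum_abs_rpow_pos {y : ι → ℝ} (hy : y ≠ 0) : 0 < ∑ j, |y j| ^ q := by
  obtain ⟨j, hj⟩ := Function.ne_iff.mp hy
  exact (Real.rpow_pos_of_pos (abs_pos.2 hj) q).trans_le
    (Finset.single_le_sum (fun k _ => Real.rpow_nonneg (abs_nonneg _) q) (Finset.mem_univ j))

theorem hasFDerivAt_sum_abs_rpow (hq : 1 < q) (y : ι → ℝ) :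
    HasFDerivAt (fun z : ι → ℝ => ∑ j, |z j| ^ q)
      (∑ j, (q * |y j| ^ (q - 2) * y j) • (ContinuousLinearMap.proj j : (ι → ℝ) →L[ℝ] ℝ)) y :=
  HasFDerivAt.fun_sum fun j _ =>
    (hasDerivAt_abs_rpow (y j) hq).comp_hasFDerivAt (f := fun z : ι → ℝ => z j) y
      (hasFDerivAt_apply j y)

theorem hasFDerivAt_radialField (hq : 1 < q) (r : ℝ) (i : ι) {y : ι → ℝ}
    (hy : 0 < ∑ j, |y j| ^ q) :
    HasFDerivAt (radialField q r i)
      (y i • (-r * (∑ j, |y j| ^ q) ^ (-r - 1)) •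
          ∑ j, (q * |y j| ^ (q - 2) * y j) • (ContinuousLinearMap.proj j : (ι → ℝ) →L[ℝ] ℝ) +
        (∑ j, |y j| ^ q) ^ (-r) • (ContinuousLinearMap.proj i : (ι → ℝ) →L[ℝ] ℝ)) y := by
  have hmul := (hasFDerivAt_apply i y).fun_mul
    ((hasFDerivAt_sum_abs_rpow hq y).rpow_const (p := -r) (Or.inl hy.ne'))
  refine hmul.congr_of_eventuallyEq (.of_forall fun z => ?_)
  simp only [radialField, div_eq_mul_inv,
    Real.rpow_neg (Finset.sum_nonneg fun j _ => Real.rpow_nonneg (abs_nonneg (z j)) q)]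

variable [DecidableEq ι]

def divergence (f : ι → (ι → ℝ) → ℝ) (y : ι → ℝ) : ℝ :=
  ∑ i, fderiv ℝ (f i) y (Pi.single i 1)

theorem divergence_radialField_eq_zero (hq : 1 < q) {r : ℝ} (hqr : q * r = Fintype.card ι)
    {y : ι → ℝ} (hy : 0 < ∑ j, |y j| ^ q) : divergence (radialField q r) y = 0 := by
  set g := ∑ j, |y j| ^ q with hg
  have hpartial : ∀ i, fderiv ℝ (radialField q r i) y (Pi.single i 1) =
      g ^ (-r) - r * q * g ^ (-r - 1) * |y i| ^ q := by
    intro i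
    rw [(hasFDerivAt_radialField hq r i hy).fderiv]
    simp only [← hg, add_apply, smul_apply, sum_apply, ContinuousLinearMap.proj_apply,
      Pi.single_apply, smul_eq_mul, mul_ite, mul_one, mul_zero, Finset.sum_ite_eq',
      Finset.mem_univ, if_true]
    linear_combination
      (-(r * q * g ^ (-r - 1))) * abs_rpow_sub_two_mul_sq (zero_lt_one.trans hq).ne' (y i)
  have hg_mul : g ^ (-r - 1) * g = g ^ (-r) := by
    rw [← Real.rpow_add_one hy.ne']; ring_nf
  simp only [divergence, hpartial, Finset.sum_sub_distrib, Finset.sum_const, Finset.card_univ,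
    nsmul_eq_mul, ← Finset.mul_sum, ← hg]
  linear_combination (-r * q) * hg_mul - g ^ (-r) * hqr

theorem sum_setIntegral_face_sub_eq_zero_of_divergence_eq_zero {n : ℕ} {a b : Fin (n + 1) → ℝ}
    (hle : a ≤ b) {f : Fin (n + 1) → (Fin (n + 1) → ℝ) → ℝ}
    (hf : ∀ y ∈ Icc a b, ∀ i, DifferentiableAt ℝ (f i) y)
    (hdiv : ∀ y ∈ Icc a b, divergence f y = 0) :
    ∑ i, ((∫ z in Icc (a ∘ i.succAbove) (b ∘ i.succAbove), f i (i.insertNth (b i) z)) -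
      ∫ z in Icc (a ∘ i.succAbove) (b ∘ i.succAbove), f i (i.insertNth (a i) z)) = 0 := by
  have hcont : ∀ i, ContinuousOn (f i) (Icc a b) := fun i y hy =>
    (hf y hy i).continuousAt.continuousWithinAt
  have hderiv : ∀ y ∈ (univ.pi fun i => Ioo (a i) (b i)) \ ∅, ∀ i,
      HasFDerivAt (f i) (fderiv ℝ (f i) y) y := fun y hy i =>
    (hf y ⟨fun j => (hy.1 j trivial).1.le, fun j => (hy.1 j trivial).2.le⟩ i).hasFDerivAt
  have hint : IntegrableOn (divergence f) (Icc a b) :=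
    (integrableOn_congr_fun hdiv measurableSet_Icc).2 integrableOn_zero
  rw [← integral_divergence_of_hasFDerivAt_off_countable' a b hle f
    (fun i y => fderiv ℝ (f i) y) ∅ countable_empty hcont hderiv hint]
  exact (setIntegral_congr_fun measurableSet_Icc hdiv).trans (integral_zero _ _)

end

theorem ne_zero_of_mem_Icc_sub_half_add_half {ι : Type*} {x : ι → ℤ} (hx : x ≠ 0) {y : ι → ℝ}
    (hy : y ∈ Icc (fun i => (x i : ℝ) - 1 / 2) (fun i => (x i : ℝ) + 1 / 2)) : y ≠ 0 := by
  obtain ⟨i, hi⟩ := Function.ne_iff.mp hx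
  have hxi : (1 : ℝ) ≤ |(x i : ℝ)| := by exact_mod_cast Int.one_le_abs hi
  have hyi : |y i - x i| ≤ 1 / 2 := abs_le.2 ⟨by linarith [hy.1 i], by linarith [hy.2 i]⟩
  intro h
  simp only [h, Pi.zero_apply, zero_sub, abs_neg] at hyi
  linarith

theorem setIntegral_pi_ne_eq_setIntegral_insertNth {n : ℕ} {E : Type*} [NormedAddCommGroup E]
    [NormedSpace ℝ E] (F : (Fin (n + 1) → ℝ) → E) (a b : Fin (n + 1) → ℝ) (i : Fin (n + 1))
    (c : ℝ) :
    (∫ w : {j // j ≠ i} → ℝ in univ.pi fun j => Icc (a j.1) (b j.1),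
        F fun k => if hk : k = i then c else w ⟨k, hk⟩) =
      ∫ z in Icc (a ∘ i.succAbove) (b ∘ i.succAbove), F (i.insertNth c z) := by
  have hmp := volume_measurePreserving_piCongrLeft (fun _ : {j // j ≠ i} => ℝ) (finSuccAboveEquiv i)
  rw [← hmp.setIntegral_preimage_emb (MeasurableEquiv.measurableEmbedding _)]
  have hset : MeasurableEquiv.piCongrLeft (fun _ => ℝ) (finSuccAboveEquiv i) ⁻¹'
      (univ.pi fun j : {j // j ≠ i} => Icc (a j.1) (b j.1)) =
      Icc (a ∘ i.succAbove) (b ∘ i.succAbove) := by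
    rw [MeasurableEquiv.coe_piCongrLeft, Equiv.piCongrLeft_preimage_univ_pi, ← pi_univ_Icc]
    rfl
  rw [hset]
  refine setIntegral_congr_fun measurableSet_Icc fun z _ => congrArg F (funext fun k => ?_)
  by_cases hk : k = i
  · subst hk
    simp
  · obtain ⟨j, rfl⟩ := Fin.exists_succAbove_eq hk
    rw [dif_neg hk, Fin.insertNth_apply_succAbove, ← finSuccAboveEquiv_apply]
    exact MeasurableEquiv.piCongrLeft_apply_apply (β := fun _ => ℝ) (finSuccAboveEquiv i) z j

/-- The discretization of the divergence-free field Θ(x) = x/|x|_q^d (with q = d/(d-1),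
so |x|_q^d = (∑_j |x_j|^q)^{d-1}) obtained by integrating its flux through the faces of
unit cubes centered at lattice points satisfies the node law on ℤ^d \ {0}. -/
theorem discretized_flow_node_law (d : ℕ) (hd : 2 ≤ d) (q : ℝ)
    (hq : q = d / ((d : ℝ) - 1))
    (Θ : Fin d → (Fin d → ℝ) → ℝ)
    (hΘ : ∀ (i : Fin d) (y : Fin d → ℝ), Θ i y = y i / (∑ j, |y j| ^ q) ^ ((d : ℝ) - 1))
    (flux : (Fin d → ℤ) → Fin d → ℝ → ℝ)
    (hflux : ∀ (x : Fin d → ℤ) (i : Fin d) (s : ℝ),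
      flux x i s =
        ∫ w : {j : Fin d // j ≠ i} → ℝ in
          Set.univ.pi (fun j : {j : Fin d // j ≠ i} =>
            Set.Icc ((x j.1 : ℝ) - 1 / 2) ((x j.1 : ℝ) + 1 / 2)),
          Θ i (fun k => if hk : k = i then s else w ⟨k, hk⟩)) :
    ∀ x : Fin d → ℤ, x ≠ 0 →
      ∑ i, (flux x i ((x i : ℝ) + 1 / 2) - flux x i ((x i : ℝ) - 1 / 2)) = 0 := by
  intro x hx
  have hd1 : (0 : ℝ) < d - 1 := by
    rw [sub_pos, Nat.one_lt_cast]
    omega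
  have hq1 : 1 < q := by
    rw [hq, one_lt_div hd1]
    linarith
  have hqr : q * ((d : ℝ) - 1) = Fintype.card (Fin d) := by
    rw [Fintype.card_fin, hq, div_mul_cancel₀ _ hd1.ne']
  have hΘ_eq : Θ = radialField q ((d : ℝ) - 1) := funext fun i => funext (hΘ i)
  have hpos : ∀ y ∈ Icc (fun i => (x i : ℝ) - 1 / 2) (fun i => (x i : ℝ) + 1 / 2),
      0 < ∑ j, |y j| ^ q :=
    fun y hy => sum_abs_rpow_pos (ne_zero_of_mem_Icc_sub_half_add_half hx hy)
  obtain ⟨n, rfl⟩ : ∃ n, d = n + 1 := ⟨d - 1, by omega⟩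
  subst hΘ_eq
  have key := sum_setIntegral_face_sub_eq_zero_of_divergence_eq_zero
    (fun i => by dsimp only; linarith)
    (fun y hy i => (hasFDerivAt_radialField hq1 _ i (hpos y hy)).differentiableAt)
    (fun y hy => divergence_radialField_eq_zero hq1 hqr (hpos y hy))
  refine (Finset.sum_congr rfl fun i _ => ?_).trans key
  simp only [hflux, setIntegral_pi_ne_eq_setIntegral_insertNth _ (fun i => (x i : ℝ) - 1 / 2)
    (fun i => (x i : ℝ) + 1 / 2)]
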